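/- For every a ∈ 𝔹 \ {0} and every q ∈ ℍ with |q| ≤ 1: B_a(q) = 0 if and only if q = a; i.e., the slice Blaschke factor B_a has the unique zero a. -/

import Mathlib

noncomputable section

local notation "ℍ" => Quaternion ℝ

/-- The power series function `F_c(q) = Σ_n q^n c_n` associated to a coefficient
sequence `c : ℕ → ℍ`. -/
def Fc (c : ℕ → ℍ) (q : ℍ) : ℍ := ∑' n, q ^ n * c n

/-- Cauchy product `(b ⋆ c)_n = Σ_{k=0}^n b_k c_{n-k}` of coefficient sequences,
i.e. the coefficient sequence of the slice `*`-product. -/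
def cprod (b c : ℕ → ℍ) : ℕ → ℍ := fun n => ∑ k ∈ Finset.range (n + 1), b k * c (n - k)

/-- Coefficient sequence `ε(a)_n = √(1-|a|²) conj(a)^n` of the slice normalized
Szegő kernel `e_a`. -/
def eps (a : ℍ) : ℕ → ℍ := fun n => Real.sqrt (1 - ‖a‖ ^ 2) • (star a) ^ n

open scoped Classical in
/-- Coefficient sequence `β(a)` of the slice Blaschke factor `B_a`:
`β(a)_0 = a²/|a|`, `β(a)_n = -conj(a)^{n-1}(1-|a|²)(a/|a|)` for `n ≥ 1`,
with the convention `β(0)_n = 1` iff `n = 1` (that is, `B_0(q) = q`). -/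
def betaC (a : ℍ) : ℕ → ℍ :=
  if a = 0 then fun n => if n = 1 then 1 else 0
  else fun n =>
    if n = 0 then a ^ 2 / (‖a‖ : ℍ)
    else -((star a) ^ (n - 1) * ((1 - ‖a‖ ^ 2 : ℝ) : ℍ) * (a / (‖a‖ : ℍ)))

/-- The identity for the Cauchy product: coefficient sequence of the constant `1`. -/
def deltaSeq : ℕ → ℍ := fun n => if n = 0 then 1 else 0

/-- Coefficient sequence of the Blaschke product `B_{a_0} * ⋯ * B_{a_{k-1}}`
(0-indexed; `Bprod a 0` is the empty product, i.e. the constant `1`). -/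
def Bprod (a : ℕ → ℍ) : ℕ → (ℕ → ℍ)
  | 0 => deltaSeq
  | k + 1 => cprod (Bprod a k) (betaC (a k))

/-- Coefficient sequence of the `k`-th slice Takenaka–Malmquist function
`T_{k+1} = B_{a_0} * ⋯ * B_{a_{k-1}} * e_{a_k}` (0-indexed). -/
def tau (a : ℕ → ℍ) (k : ℕ) : ℕ → ℍ := cprod (Bprod a k) (eps (a k))

/-- `e^{It} = cos t + I sin t`. -/
def expI (I : ℍ) (t : ℝ) : ℍ := ((Real.cos t : ℝ) : ℍ) + ((Real.sin t : ℝ) : ℍ) * I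

/-- The slice Blaschke factor written explicitly:
`B_a(q) = (1 - 2Re(a)q + |a|²q²)⁻¹ (a - q(1+a²) + q²a)(a/|a|)`. -/
def Ba (a : ℍ) (q : ℍ) : ℍ :=
  ((1 : ℍ) - ((2 * a.re : ℝ) : ℍ) * q + ((‖a‖ ^ 2 : ℝ) : ℍ) * q ^ 2)⁻¹ *
    (a - q * (1 + a ^ 2) + q ^ 2 * a) * (a / (‖a‖ : ℍ))

/-!
The numerator factors as `(a - q) - q (a - q) a`; if it vanishes then
`‖a - q‖ ≤ ‖q‖ ‖a - q‖ ‖a‖`, which forces `q = a` because `‖q‖ ≤ 1` and `‖a‖ < 1`.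
The denominator is a real quadratic polynomial in `q`; using `q² = 2 Re(q) q - |q|²` it lies in
`ℝ + ℝq`, so for non-real `q` it vanishes only if its constant term `1 - |a|²|q|²` does, and for
real `q = t` it is `1 - 2 Re(a) t + |a|² t² ≥ (1 - |a||t|)² > 0`.
-/

theorem eq_zero_of_eq_mul_mul_of_norm_lt_one {R : Type*} [NormedRing R] {q x a : R}
    (hq : ‖q‖ ≤ 1) (ha : ‖a‖ < 1) (h : x = q * x * a) : x = 0 := by
  by_contra hx
  have hx_pos : 0 < ‖x‖ := norm_pos_iff.mpr hx
  have hle : ‖x‖ ≤ ‖x‖ * ‖a‖ :=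
    calc ‖x‖ = ‖q * x * a‖ := by rw [← h]
      _ ≤ ‖q‖ * ‖x‖ * ‖a‖ := (norm_mul_le _ _).trans (by gcongr; exact norm_mul_le _ _)
      _ ≤ ‖x‖ * ‖a‖ := by gcongr; exact mul_le_of_le_one_left (norm_nonneg x) hq
  exact hle.not_gt (mul_lt_of_lt_one_right hx_pos ha)

theorem Quaternion.sq_eq_two_re_mul_sub_normSq {R : Type*} [CommRing R] (q : Quaternion R) :
    q ^ 2 = ((2 * q.re : R) : Quaternion R) * q - ((normSq q : R) : Quaternion R) := by
  rw [sq, ← self_mul_star, ← self_add_star', add_mul, star_comm_self]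
  abel

theorem Quaternion.abs_re_le_norm (a : ℍ) : |a.re| ≤ ‖a‖ := by
  have h : a.re ^ 2 ≤ ‖a‖ ^ 2 := by
    rw [sq ‖a‖, ← normSq_eq_norm_mul_self, normSq_def']
    nlinarith [sq_nonneg a.imI, sq_nonneg a.imJ, sq_nonneg a.imK]
  simpa [abs_norm] using sq_le_sq.mp h

theorem Quaternion.coe_add_coe_mul_eq_zero_iff {r s : ℝ} {q : ℍ} (hq : q.im ≠ 0) :
    (r : ℍ) + s * q = 0 ↔ r = 0 ∧ s = 0 := by
  refine ⟨fun h => ?_, fun ⟨hr, hs⟩ => by simp [hr, hs]⟩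
  have hs : s = 0 := by
    have him := congrArg Quaternion.im h
    rw [im_add, im_coe, coe_mul_eq_smul, im_smul, zero_add, im_zero] at him
    exact (smul_eq_zero.mp him).resolve_right hq
  exact ⟨Quaternion.coe_injective (by simpa [hs] using h), hs⟩

theorem blaschke_denom_ne_zero {a q : ℍ} (ha : ‖a‖ < 1) (hq : ‖q‖ ≤ 1) :
    (1 : ℍ) - ((2 * a.re : ℝ) : ℍ) * q + ((‖a‖ ^ 2 : ℝ) : ℍ) * q ^ 2 ≠ 0 := by
  have haq : ‖a‖ * ‖q‖ < 1 := (mul_le_of_le_one_right (norm_nonneg a) hq).trans_lt ha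
  by_cases hreal : q.im = 0
  · have hq_eq : q = (q.re : ℍ) := by rw [← q.re_add_im, hreal, add_zero, Quaternion.re_coe]
    have hre_mul : a.re * q.re ≤ ‖a‖ * |q.re| :=
      (le_abs_self _).trans <| by
        rw [abs_mul]; gcongr; exact Quaternion.abs_re_le_norm a
    have hlt : ‖a‖ * |q.re| < 1 :=
      lt_of_le_of_lt (by gcongr; exact Quaternion.abs_re_le_norm q) haq
    rw [hq_eq, ← Quaternion.coe_pow, ← Quaternion.coe_mul, ← Quaternion.coe_mul,
      ← Quaternion.coe_one, ← Quaternion.coe_sub, ← Quaternion.coe_add, Ne,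
      ← Quaternion.coe_zero, Quaternion.coe_inj]
    nlinarith [sq_abs q.re]
  · have hD : (1 : ℍ) - ((2 * a.re : ℝ) : ℍ) * q + ((‖a‖ ^ 2 : ℝ) : ℍ) * q ^ 2 =
        ((1 - ‖a‖ ^ 2 * ‖q‖ ^ 2 : ℝ) : ℍ) + ((2 * ‖a‖ ^ 2 * q.re - 2 * a.re : ℝ) : ℍ) * q := by
      rw [Quaternion.sq_eq_two_re_mul_sub_normSq, sq ‖q‖, ← Quaternion.normSq_eq_norm_mul_self]
      ext <;> simp <;> ring
    rw [hD, Ne, Quaternion.coe_add_coe_mul_eq_zero_iff hreal]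
    rintro ⟨hconst, -⟩
    nlinarith [mul_pow ‖a‖ ‖q‖ 2, mul_nonneg (norm_nonneg a) (norm_nonneg q)]

theorem blaschke_numerator_eq {R : Type*} [Ring R] (a q : R) :
    a - q * (1 + a ^ 2) + q ^ 2 * a = (a - q) - q * (a - q) * a := by
  noncomm_ring

/-- the slice Blaschke factor `B_a` has the unique zero `a`
in the closed unit ball. -/
theorem blaschke_unique_zero (a : ℍ) (ha : ‖a‖ < 1) (ha0 : a ≠ 0) :
    ∀ q : ℍ, ‖q‖ ≤ 1 → (Ba a q = 0 ↔ q = a) := by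
  intro q hq
  have hunit : a / (‖a‖ : ℍ) ≠ 0 := div_ne_zero ha0 <| by
    rw [Ne, ← Quaternion.coe_zero, Quaternion.coe_inj]; exact norm_ne_zero_iff.mpr ha0
  rw [Ba, mul_eq_zero, mul_eq_zero, inv_eq_zero, blaschke_numerator_eq, sub_eq_zero]
  simp only [blaschke_denom_ne_zero ha hq, hunit, false_or, or_false]
  refine ⟨fun h => ?_, by rintro rfl; simp⟩
  exact (sub_eq_zero.mp (eq_zero_of_eq_mul_mul_of_norm_lt_one hq ha h)).symm
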